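/- Let ξ, η, ζ ∈ Q±* be freely irreducible words following the same pattern. Then for every k ∈ ℕ there exist words w, v ∈ X*₍₁₎ with |w| = |v| ≥ k such that the dual mappings of the automaton B satisfy D_{1,w}(ξ) = η and D_{1,v}(ξ) = ζ. -/

import Mathlib

/-- The four states `a, b, a⁻¹, b⁻¹` of the automaton `B`. -/
inductive Qpm
  | a | b | ai | bi
  deriving DecidableEq

open Qpm

/-- The `r`-cycle `σ = (1,2,…,r)` on `{1,…,r}`. -/
def csigma (r x : ℕ) : ℕ := if x = r then 1 else x + 1

/-- The inverse of the `r`-cycle `σ`. -/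
def csigmaInv (r x : ℕ) : ℕ := if x = 1 then r else x - 1

/-- The transposition `τ = (1,2)`. -/
def ctau (x : ℕ) : ℕ := if x = 1 then 2 else if x = 2 then 1 else x

/-- The transition function of the automaton `B`: states are fixed on letters
other than 1,2; on letter 1 it swaps `a ↔ b`; on letter 2 it swaps `a⁻¹ ↔ b⁻¹`. -/
def phiB (x : ℕ) (q : Qpm) : Qpm :=
  if x = 1 then
    (match q with
     | a => b
     | b => a
     | q => q)
  else if x = 2 then
    (match q with
     | ai => bi
     | bi => ai
     | q => q)
  else q

/-- The output function of `B`: `σᵢ` at `a`, `σᵢ⁻¹` at `a⁻¹`, `τ` at `b, b⁻¹`. -/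
def psiB (ri : ℕ) (q : Qpm) (x : ℕ) : ℕ :=
  match q with
  | a => csigma ri x
  | ai => csigmaInv ri x
  | _ => ctau x

/-- The dual mapping `D_{i,x}` of the automaton `B` (over `Xᵢ = {1,…,rᵢ}`). -/
def dualB (r : ℕ → ℕ) (i : ℕ) : ℕ → List Qpm → List Qpm
  | _, [] => []
  | x, q :: qs => phiB x q :: dualB r i (psiB (r i) q x) qs

/-- `D_{i,w}`, the composition of dual mappings of `B` along the word `w`. -/
def dualWB (r : ℕ → ℕ) : ℕ → List ℕ → List Qpm → List Qpm
  | _, [], ξ => ξ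
  | i, x :: xs, ξ => dualWB r (i + 1) xs (dualB r i x ξ)

/-- The formal inverse of a state. -/
def qinv : Qpm → Qpm
  | a => ai
  | ai => a
  | b => bi
  | bi => b

/-- The swap `a ↔ b`, `a⁻¹ ↔ b⁻¹` (the tilde operation). -/
def til : Qpm → Qpm
  | a => b
  | b => a
  | ai => bi
  | bi => ai

/-- The pattern symbol of a state: `true` stands for `*`, `false` for `*⁻¹`. -/
def patt : Qpm → Bool
  | a => true
  | b => true
  | _ => false

/-- A word over `Q±` is freely irreducible if no two consecutive letters are
mutually inverse. -/
def FreelyIrred (ξ : List Qpm) : Prop := List.Chain' (fun p q => q ≠ qinv p) ξ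

/-- A word over the changing alphabet `Xᵢ = {1,…,rᵢ}`, starting at index `i`. -/
def ValidB (r : ℕ → ℕ) : ℕ → List ℕ → Prop
  | _, [] => True
  | i, x :: xs => x ∈ Set.Icc 1 (r i) ∧ ValidB r (i + 1) xs

/-!
The dual action of a letter `x` on `q :: t` replaces `q` by `φ(x, q)` and passes `ψ(q, x)` on to
`t`. Inverting `ψ(q, ·)` letter by letter, every word `y` acting on the tail lifts to a word acting
on `q :: t`, and the head ends as `q` flipped (`q ↦ q̃`) once for every occurrence in `y` of the
letter that flips the opposite pattern. Transitivity on words of length `n + 1` thus reduces to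
transitivity on the tail with a prescribed parity of that count. If the tail starts with the
opposite pattern, free irreducibility forces the tails of source and target to start with
`til (qinv q)` and `til (qinv q')`; the counted letter is exactly the one flipping these, so every
word taking one tail to the other has the right parity. Otherwise the parity is adjusted by routing
the tail through a word fixed both by that letter and by a large inert letter. All of this needs
`r` large compared with the length; a prefix of arbitrary letters reaches such an index, and inert
letters pad to any length.
-/

open Filter

@[simp] lemma til_til (q : Qpm) : til (til q) = q := by cases q <;> rfl

lemma til_involutive : Function.Involutive til := til_til

@[simp] lemma patt_til (q : Qpm) : patt (til q) = patt q := by cases q <;> rfl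

@[simp] lemma qinv_qinv (q : Qpm) : qinv (qinv q) = q := by cases q <;> rfl

lemma qinv_involutive : Function.Involutive qinv := qinv_qinv

lemma qinv_til (q : Qpm) : qinv (til q) = til (qinv q) := by cases q <;> rfl

lemma til_iterate_mod_two (k : ℕ) (q : Qpm) : til^[k] q = til^[k % 2] q := by
  conv_lhs => rw [← Nat.div_add_mod k 2, Function.iterate_add_apply,
    til_involutive.iterate_two_mul, id]

lemma til_iterate_til_qinv (k : ℕ) (q : Qpm) :
    til^[k] (til (qinv q)) = til (qinv (til^[k] q)) := by
  induction k with
  | zero => rfl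
  | succ k ih => simp only [Function.iterate_succ_apply', ih, qinv_til]

lemma exists_eq_til_iterate_of_patt_eq {q q' : Qpm} (h : patt q' = patt q) :
    ∃ ε, q' = til^[ε] q := by
  cases q <;> cases q' <;> simp_all [patt] <;> first | exact ⟨0, rfl⟩ | exact ⟨1, rfl⟩

lemma eq_til_qinv_of_patt_ne {q s : Qpm} (h : patt s ≠ patt q) (hs : s ≠ qinv q) :
    s = til (qinv q) := by
  cases q <;> cases s <;> simp_all [patt, qinv, til]

def flipLetter (p : Bool) : ℕ := if p then 1 else 2

lemma flipLetter_mem (p : Bool) : flipLetter p ∈ Set.Icc 1 2 := by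
  cases p <;> simp [flipLetter]

lemma phiB_eq_ite (x : ℕ) (q : Qpm) :
    phiB x q = if x = flipLetter (patt q) then til q else q := by
  cases q <;> unfold phiB <;> split_ifs <;> simp_all [flipLetter, patt, til]

@[simp] lemma patt_phiB (x : ℕ) (q : Qpm) : patt (phiB x q) = patt q := by
  rw [phiB_eq_ite]; split_ifs <;> simp

@[simp] lemma phiB_phiB (x : ℕ) (q : Qpm) : phiB x (phiB x q) = q := by
  unfold phiB; split_ifs <;> cases q <;> rfl

lemma phiB_of_three_le {x : ℕ} (hx : 3 ≤ x) (q : Qpm) : phiB x q = q := by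
  rw [phiB_eq_ite, if_neg]; cases patt q <;> simp [flipLetter] <;> omega

lemma phiB_psiB_qinv_phiB {rr x : ℕ} (hrr : 2 ≤ rr) (hx : x ∈ Set.Icc 1 rr) (q : Qpm) :
    phiB (psiB rr q x) (qinv (phiB x q)) = qinv q := by
  obtain ⟨h1, h2⟩ := hx
  cases q <;> simp only [phiB, psiB, qinv, csigma, csigmaInv, ctau] <;>
    split_ifs <;> first | rfl | omega

variable {r : ℕ → ℕ}

lemma validB_append {i : ℕ} {w v : List ℕ} :
    ValidB r i (w ++ v) ↔ ValidB r i w ∧ ValidB r (i + w.length) v := by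
  induction w generalizing i with
  | nil => simp [ValidB]
  | cons x w ih => simp [ValidB, ih, and_assoc, Nat.add_right_comm, Nat.add_assoc]

lemma validB_replicate {i x : ℕ} (hx : ∀ k, i ≤ k → x ∈ Set.Icc 1 (r k)) (m : ℕ) :
    ValidB r i (List.replicate m x) := by
  induction m generalizing i with
  | zero => trivial
  | succ m ih => exact ⟨hx i le_rfl, ih fun k hk => hx k (by omega)⟩

lemma dualWB_append (i : ℕ) (w v : List ℕ) (ξ : List Qpm) :
    dualWB r i (w ++ v) ξ = dualWB r (i + w.length) v (dualWB r i w ξ) := by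
  induction w generalizing i ξ with
  | nil => rfl
  | cons x w ih => simp [dualWB, ih, Nat.add_right_comm, Nat.add_assoc]

@[simp] lemma length_dualB (i x : ℕ) (ξ : List Qpm) : (dualB r i x ξ).length = ξ.length := by
  induction ξ generalizing x with
  | nil => rfl
  | cons q ξ ih => simp [dualB, ih]

@[simp] lemma length_dualWB (i : ℕ) (w : List ℕ) (ξ : List Qpm) :
    (dualWB r i w ξ).length = ξ.length := by
  induction w generalizing i ξ with
  | nil => rfl
  | cons x w ih => simp [dualWB, ih]

@[simp] lemma map_patt_dualB (i x : ℕ) (ξ : List Qpm) :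
    (dualB r i x ξ).map patt = ξ.map patt := by
  induction ξ generalizing x with
  | nil => rfl
  | cons q ξ ih => simp [dualB, ih]

@[simp] lemma map_patt_dualWB (i : ℕ) (w : List ℕ) (ξ : List Qpm) :
    (dualWB r i w ξ).map patt = ξ.map patt := by
  induction w generalizing i ξ with
  | nil => rfl
  | cons x w ih => simp [dualWB, ih]

lemma psiB_mem {rr x : ℕ} (hrr : 2 ≤ rr) (hx : x ∈ Set.Icc 1 rr) (q : Qpm) :
    psiB rr q x ∈ Set.Icc 1 rr := by
  obtain ⟨h1, h2⟩ := hx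
  cases q <;> simp only [psiB, csigma, csigmaInv, ctau, Set.mem_Icc] <;> split_ifs <;> omega

lemma FreelyIrred.dualB {i x : ℕ} (hr : 2 ≤ r i) (hx : x ∈ Set.Icc 1 (r i)) {ξ : List Qpm}
    (hξ : FreelyIrred ξ) : FreelyIrred (dualB r i x ξ) := by
  induction ξ generalizing x with
  | nil => exact hξ
  | cons q ξ ih =>
    cases ξ with
    | nil => exact List.isChain_singleton _
    | cons q₂ ξ =>
      obtain ⟨hq, hξ⟩ := List.isChain_cons_cons.mp hξ
      refine List.isChain_cons_cons.mpr ⟨fun h => hq ?_, ih (psiB_mem hr hx q) hξ⟩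
      rw [← phiB_psiB_qinv_phiB hr hx, ← h, phiB_phiB]

lemma FreelyIrred.dualWB (hr : ∀ k, 2 ≤ r k) {i : ℕ} {w : List ℕ} (hw : ValidB r i w)
    {ξ : List Qpm} (hξ : FreelyIrred ξ) : FreelyIrred (dualWB r i w ξ) := by
  induction w generalizing i ξ with
  | nil => exact hξ
  | cons x w ih => exact ih hw.2 (hξ.dualB (hr i) hw.1)

lemma head?_dualWB (i : ℕ) (w : List ℕ) (s : Qpm) (t : List Qpm) :
    (dualWB r i w (s :: t)).head? = some (til^[w.count (flipLetter (patt s))] s) := by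
  induction w generalizing i s t with
  | nil => rfl
  | cons x w ih =>
    simp only [dualWB, dualB, ih, patt_phiB, List.count_cons, beq_iff_eq]
    rw [phiB_eq_ite]
    split_ifs <;> simp [Function.iterate_succ_apply]

lemma dualB_eq_self {j e : ℕ} {u : List Qpm} (hlo : 3 + u.count ai ≤ e)
    (hhi : e + u.count a ≤ r j) : dualB r j e u = u := by
  induction u generalizing e with
  | nil => rfl
  | cons q u ih =>
    simp only [List.count_cons, beq_iff_eq] at hlo hhi
    simp only [dualB, phiB_of_three_le (by omega : 3 ≤ e), List.cons.injEq, true_and]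
    -- the letter climbs through `a`, descends through `a⁻¹` and never leaves `[3, r j]`
    apply ih <;> cases q <;> simp only [psiB, csigma, csigmaInv, ctau] at * <;>
      split_ifs <;> simp_all <;> omega

lemma dualB_length_add_three_eq_self {j : ℕ} {u : List Qpm} (hr : 2 * u.length + 3 ≤ r j) :
    dualB r j (u.length + 3) u = u :=
  dualB_eq_self (by have := u.count_le_length (a := ai); omega)
    (by have := u.count_le_length (a := a); omega)

lemma dualWB_replicate_eq_self (hmono : Monotone r) {j : ℕ} {u : List Qpm}
    (hr : 2 * u.length + 3 ≤ r j) (m : ℕ) :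
    dualWB r j (List.replicate m (u.length + 3)) u = u := by
  induction m generalizing j with
  | zero => rfl
  | succ m ih =>
    rw [List.replicate_succ, dualWB, dualB_length_add_three_eq_self hr]
    exact ih (hr.trans (hmono j.le_succ))

def psiBInv (rr : ℕ) : Qpm → ℕ → ℕ
  | a => csigmaInv rr
  | ai => csigma rr
  | _ => ctau

lemma psiBInv_mem {rr y : ℕ} (hrr : 2 ≤ rr) (hy : y ∈ Set.Icc 1 rr) (q : Qpm) :
    psiBInv rr q y ∈ Set.Icc 1 rr := by
  obtain ⟨h1, h2⟩ := hy
  cases q <;> simp only [psiBInv, csigma, csigmaInv, ctau, Set.mem_Icc] <;> split_ifs <;> omega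

lemma psiB_psiBInv {rr y : ℕ} (hy : y ∈ Set.Icc 1 rr) (q : Qpm) :
    psiB rr q (psiBInv rr q y) = y := by
  obtain ⟨h1, h2⟩ := hy
  cases q <;> simp only [psiB, psiBInv, csigma, csigmaInv, ctau] <;> split_ifs <;> omega

lemma phiB_psiBInv {rr y : ℕ} (hrr : 2 ≤ rr) (hy : y ∈ Set.Icc 1 rr) (q : Qpm) :
    phiB (psiBInv rr q y) q = if y = flipLetter (!patt q) then til q else q := by
  obtain ⟨h1, h2⟩ := hy
  rw [phiB_eq_ite]
  cases q <;> simp only [psiBInv, patt, flipLetter, Bool.not_true, Bool.not_false, csigma,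
    csigmaInv, ctau] <;> split_ifs <;> first | rfl | contradiction | omega

def liftWord (r : ℕ → ℕ) : ℕ → Qpm → List ℕ → List ℕ
  | _, _, [] => []
  | i, q, y :: ys => psiBInv (r i) q y :: liftWord r (i + 1) (phiB (psiBInv (r i) q y) q) ys

lemma validB_liftWord {i : ℕ} (hr : ∀ k, i ≤ k → 2 ≤ r k) (q : Qpm) {y : List ℕ}
    (hy : ValidB r i y) : ValidB r i (liftWord r i q y) := by
  induction y generalizing i q with
  | nil => trivial
  | cons y ys ih =>
    exact ⟨psiBInv_mem (hr i le_rfl) hy.1 q, ih (fun k hk => hr k (by omega)) _ hy.2⟩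

lemma dualWB_liftWord {i : ℕ} (hr : ∀ k, i ≤ k → 2 ≤ r k) (q : Qpm) (t : List Qpm)
    {y : List ℕ} (hy : ValidB r i y) :
    dualWB r i (liftWord r i q y) (q :: t) =
      til^[y.count (flipLetter (!patt q))] q :: dualWB r i y t := by
  induction y generalizing i q t with
  | nil => rfl
  | cons y ys ih =>
    simp only [liftWord, dualWB, dualB, psiB_psiBInv hy.1,
      ih (fun k hk => hr k (by omega)) _ _ hy.2, phiB_psiBInv (hr i le_rfl) hy.1,
      List.count_cons, beq_iff_eq]
    split_ifs <;> simp [Function.iterate_succ_apply]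

lemma freelyIrred_map {f : Bool → Qpm} (hf : ∀ x y, f y ≠ qinv (f x)) (P : List Bool) :
    FreelyIrred (P.map f) :=
  (List.isChain_map f).2 (List.Pairwise.isChain (List.pairwise_of_forall hf))

def fixedWord : Bool → List Bool → List Qpm
  | false, P => P.map fun x => if x then a else bi
  | true, P => P.map fun x => if x then b else ai

lemma freelyIrred_fixedWord (p : Bool) (P : List Bool) : FreelyIrred (fixedWord p P) := by
  cases p <;> exact freelyIrred_map (by decide) P

@[simp] lemma length_fixedWord (p : Bool) (P : List Bool) : (fixedWord p P).length = P.length := by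
  cases p <;> simp [fixedWord]

@[simp] lemma map_patt_fixedWord (p : Bool) (P : List Bool) : (fixedWord p P).map patt = P := by
  cases p <;> rw [fixedWord, List.map_map] <;> exact List.map_id'' (fun x => by cases x <;> rfl) P

lemma dualB_fixedWord {p : Bool} {P : List Bool} (hP : ∀ x ∈ P.head?, x ≠ p) {k : ℕ}
    (hr : P.length + 2 ≤ r k) :
    dualB r k (flipLetter p) (fixedWord p P) = fixedWord p P := by
  obtain _ | ⟨x, P⟩ := P
  · cases p <;> rfl
  obtain rfl : x = !p := Bool.eq_not_iff.2 (by simpa using hP)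
  rw [List.length_cons] at hr
  have hcount (f : Bool → Qpm) (q : Qpm) : 3 + (P.map f).count q ≤ r k := by
    have := (P.map f).count_le_length (a := q)
    rw [List.length_map] at this
    omega
  -- the letter leaves the head in place and then runs monotonically through letters `≥ 3`
  cases p <;> simp only [fixedWord, flipLetter, List.map_cons, Bool.not_false, Bool.not_true,
    Bool.false_eq_true, ↓reduceIte, dualB, List.cons.injEq]
  · have h3 : psiB (r k) a 2 = 3 := if_neg (by omega)
    refine ⟨rfl, dualB_eq_self ?_ ?_⟩ <;> rw [h3]
    · simp [List.count_eq_zero]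
    · exact hcount _ a
  · refine ⟨rfl, dualB_eq_self (hcount _ ai) ?_⟩
    simp [List.count_eq_zero, psiB, csigmaInv]

def DualTransitive (r : ℕ → ℕ) (n j : ℕ) : Prop :=
  ∀ ξ η : List Qpm, ξ.length = n → FreelyIrred ξ → FreelyIrred η → ξ.map patt = η.map patt →
    ∃ w, ValidB r j w ∧ dualWB r j w ξ = η

/-- Routing `ξ` to `η` through `fixedWord`, which both `flipLetter p` and the inert letter
`n + 3` fix, the letter in the middle can be chosen to give the count either parity. -/
lemma DualTransitive.exists_count_mod_two (hmono : Monotone r) {n j : ℕ}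
    (hr : 2 * n + 3 ≤ r j) (hT : ∀ k, j ≤ k → DualTransitive r n k) {p : Bool}
    {ξ η : List Qpm} (hlen : ξ.length = n) (hξ : FreelyIrred ξ) (hη : FreelyIrred η)
    (hpat : ξ.map patt = η.map patt) (hhead : ∀ x ∈ (ξ.map patt).head?, x ≠ p) (ε : ℕ) :
    ∃ w, ValidB r j w ∧ dualWB r j w ξ = η ∧ w.count (flipLetter p) % 2 = ε % 2 := by
  set χ := fixedWord p (ξ.map patt)
  have hχlen : χ.length = n := by simp [χ, hlen]
  obtain ⟨w₀, hw₀, hξχ⟩ := hT j le_rfl ξ χ hlen hξ (freelyIrred_fixedWord _ _) (by simp [χ])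
  set k := j + w₀.length
  obtain ⟨w₁, hw₁, hχη⟩ :=
    hT (k + 1) (by omega) χ η hχlen (freelyIrred_fixedWord _ _) hη (by simp [χ, hpat])
  have hrk : 2 * n + 3 ≤ r k := hr.trans (hmono (by omega))
  have hroute (x : ℕ) (hx : x ∈ Set.Icc 1 (r k)) (hfix : dualB r k x χ = χ) :
      ValidB r j (w₀ ++ x :: w₁) ∧ dualWB r j (w₀ ++ x :: w₁) ξ = η :=
    ⟨validB_append.2 ⟨hw₀, hx, hw₁⟩, by rw [dualWB_append, hξχ, dualWB, hfix, hχη]⟩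
  obtain ⟨hc₁, hc₂⟩ := flipLetter_mem p
  by_cases hpar : (w₀.count (flipLetter p) + w₁.count (flipLetter p)) % 2 = ε % 2
  · obtain ⟨hv, hd⟩ := hroute (n + 3) ⟨by omega, by omega⟩
      (hχlen ▸ dualB_length_add_three_eq_self (hχlen ▸ hrk))
    refine ⟨_, hv, hd, ?_⟩
    rw [List.count_append, List.count_cons_of_ne (by omega)]
    exact hpar
  · obtain ⟨hv, hd⟩ := hroute (flipLetter p) ⟨hc₁, by omega⟩
      (dualB_fixedWord hhead (by simp [hlen]; omega))
    refine ⟨_, hv, hd, ?_⟩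
    rw [List.count_append, List.count_cons_self]
    omega

lemma DualTransitive.exists_tail (hmono : Monotone r) {m j : ℕ} (hr : 2 * m + 3 ≤ r j)
    (hT : ∀ k, j ≤ k → DualTransitive r m k) {q q' : Qpm} {t u : List Qpm}
    (hlen : t.length = m) (hξ : FreelyIrred (q :: t)) (hη : FreelyIrred (q' :: u))
    (hpat : (q :: t).map patt = (q' :: u).map patt) :
    ∃ y, ValidB r j y ∧ dualWB r j y t = u ∧ til^[y.count (flipLetter (!patt q))] q = q' := by
  simp only [List.map_cons, List.cons.injEq] at hpat
  obtain ⟨hqq', htu⟩ := hpat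
  have hparity (hhead : ∀ x ∈ (t.map patt).head?, x ≠ !patt q) :
      ∃ y, ValidB r j y ∧ dualWB r j y t = u ∧ til^[y.count (flipLetter (!patt q))] q = q' := by
    obtain ⟨ε, rfl⟩ := exists_eq_til_iterate_of_patt_eq hqq'.symm
    obtain ⟨y, hy, hyu, hε⟩ :=
      exists_count_mod_two hmono hr hT hlen hξ.tail hη.tail htu hhead ε
    exact ⟨y, hy, hyu, by rw [til_iterate_mod_two, hε, ← til_iterate_mod_two]⟩
  rcases t with _ | ⟨s, t⟩
  · exact hparity (by simp)
  by_cases hs : patt s = patt q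
  · exact hparity (by simp [hs])
  -- across a change of pattern, freeness pins down `s` and `s'`, hence the parity
  obtain ⟨s', u, rfl⟩ := List.exists_cons_of_ne_nil (show u ≠ [] by rintro rfl; simp at htu)
  obtain ⟨y, hy, hyu⟩ := hT j le_rfl (s :: t) (s' :: u) hlen hξ.tail hη.tail htu
  refine ⟨y, hy, hyu, ?_⟩
  have hs₀ : s = til (qinv q) := eq_til_qinv_of_patt_ne hs (List.isChain_cons_cons.1 hξ).1
  have hs₀' : s' = til (qinv q') := by
    refine eq_til_qinv_of_patt_ne ?_ (List.isChain_cons_cons.1 hη).1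
    simp only [List.map_cons, List.cons.injEq] at htu
    rwa [← htu.1, ← hqq']
  have hhead := head?_dualWB (r := r) j y s t
  rw [hyu, List.head?_cons, Option.some.injEq, Bool.eq_not_iff.2 hs,
    hs₀, hs₀', til_iterate_til_qinv] at hhead
  exact qinv_involutive.injective (til_involutive.injective hhead).symm

theorem dualTransitive (hmono : Monotone r) (n : ℕ) :
    ∀ j, 2 * n + 3 ≤ r j → DualTransitive r n j := by
  induction n with
  | zero =>
    intro j _ ξ η hlen _ _ hpat
    obtain rfl := List.length_eq_zero_iff.1 hlen
    obtain rfl : η = [] := by simpa using hpat.symm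
    exact ⟨[], trivial, rfl⟩
  | succ m ih =>
    intro j hr ξ η hlen hξ hη hpat
    obtain ⟨q, t, rfl⟩ := List.exists_cons_of_length_eq_add_one hlen
    obtain ⟨q', u, rfl⟩ := List.exists_cons_of_ne_nil (show η ≠ [] by rintro rfl; simp at hpat)
    have hr₂ (k : ℕ) (hk : j ≤ k) : 2 ≤ r k := by have := hmono hk; omega
    obtain ⟨y, hy, hyu, hq'⟩ := DualTransitive.exists_tail hmono (j := j) (by omega)
      (fun k hk => ih k (by have := hmono hk; omega)) (by simpa using hlen) hξ hη hpat
    exact ⟨liftWord r j q y, validB_liftWord hr₂ q hy,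
      by rw [dualWB_liftWord hr₂ q t hy, hq', hyu]⟩

lemma eventually_exists_dualWB_eq (hmono : Monotone r) (hge : ∀ k, 2 ≤ r k)
    (hunb : ∀ N, ∃ k, N < r k) (i : ℕ) {ξ η : List Qpm} (hξ : FreelyIrred ξ)
    (hη : FreelyIrred η) (hpat : ξ.map patt = η.map patt) :
    ∀ᶠ L in atTop, ∃ w, ValidB r i w ∧ w.length = L ∧ dualWB r i w ξ = η := by
  have hlen : η.length = ξ.length := by simpa using congrArg List.length hpat.symm
  obtain ⟨k, hk⟩ := hunb (2 * ξ.length + 3)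
  set j := max i k
  have hj : 2 * ξ.length + 3 ≤ r j := hk.le.trans (hmono (le_max_right i k))
  set w₀ := List.replicate (j - i) 1
  have hw₀ : ValidB r i w₀ := validB_replicate (fun k _ => ⟨le_rfl, by have := hge k; omega⟩) _
  have hij : i + w₀.length = j := by simp [w₀]; omega
  obtain ⟨w₁, hw₁, hw₁η⟩ := dualTransitive hmono ξ.length j hj (dualWB r i w₀ ξ) η (by simp)
    (hξ.dualWB hge hw₀) hη (by simp [hpat])
  have hr (k : ℕ) (hk : j ≤ k) : 2 * η.length + 3 ≤ r k := hlen ▸ hj.trans (hmono hk)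
  have hpad : j ≤ i + (w₀ ++ w₁).length := by simp [w₀]; omega
  refine eventually_atTop.2 ⟨w₀.length + w₁.length, fun L hL => ?_⟩
  refine ⟨w₀ ++ w₁ ++ List.replicate (L - w₀.length - w₁.length) (η.length + 3), ?_, ?_, ?_⟩
  · refine validB_append.2 ⟨validB_append.2 ⟨hw₀, hij ▸ hw₁⟩, validB_replicate (fun k hk => ?_) _⟩
    have := hr k (hpad.trans hk)
    exact ⟨by omega, by omega⟩
  · simp only [List.length_append, List.length_replicate]; omega
  · rw [dualWB_append, dualWB_append, hij, hw₁η]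
    exact dualWB_replicate_eq_self hmono (hr _ hpad) _

/-- for freely irreducible words `ξ, η, ζ` following the same
pattern and any `k`, there are words `w, v ∈ X*₍₁₎` with `|w| = |v| ≥ k`,
`D_{1,w}(ξ) = η` and `D_{1,v}(ξ) = ζ`. -/
theorem dual_action_simultaneous_transitivity
    (r : ℕ → ℕ) (hmono : Monotone r) (hge : ∀ i, 2 ≤ r i)
    (hunb : ∀ N, ∃ i, N < r i)
    (ξ η ζ : List Qpm) (hξ : FreelyIrred ξ) (hη : FreelyIrred η)
    (hζ : FreelyIrred ζ)
    (hp1 : ξ.map patt = η.map patt) (hp2 : ξ.map patt = ζ.map patt) :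
    ∀ k : ℕ, ∃ w v : List ℕ,
      ValidB r 1 w ∧ ValidB r 1 v ∧ w.length = v.length ∧ k ≤ w.length ∧
      dualWB r 1 w ξ = η ∧ dualWB r 1 v ξ = ζ := by
  intro k
  obtain ⟨L, ⟨w, hw, hwL, hwη⟩, ⟨v, hv, hvL, hvζ⟩, hkL⟩ :=
    ((eventually_exists_dualWB_eq hmono hge hunb 1 hξ hη hp1).and
      ((eventually_exists_dualWB_eq hmono hge hunb 1 hξ hζ hp2).and
        (eventually_ge_atTop k))).exists
  exact ⟨w, v, hw, hv, hwL.trans hvL.symm, hwL ▸ hkL, hwη, hvζ⟩
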